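/- If each f_n commutes with f, each f_n is surjective, Σ_{n=1}^∞ D(f_n, f) < ∞, and the set of pairs proximal for (X, F) is dense in X × X, then the set of pairs proximal for (X, f) is dense in X × X. -/
import Mathlib


open Filter Metric Set

noncomputable def supD {X : Type*} [MetricSpace X] (g h : X → X) : ℝ :=
  ⨆ x, dist (g x) (h x)

def omega {X : Type*} (fn : ℕ → X → X) : ℕ → X → X
  | 0 => id
  | k + 1 => fn (k + 1) ∘ omega fn k

def omegaSeg {X : Type*} (fn : ℕ → X → X) (n : ℕ) : ℕ → X → X
  | 0 => id
  | k + 1 => fn (n + k + 1) ∘ omegaSeg fn n k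

lemma dist_le_supD {X : Type*} [MetricSpace X] [CompactSpace X] (g h : X → X) (x : X) :
    dist (g x) (h x) ≤ supD g h := by
  have hbdd : BddAbove (Set.range fun y => dist (g y) (h y)) := by
    refine ⟨Metric.diam (Set.univ : Set X), ?_⟩
    rintro r ⟨y, rfl⟩
    exact Metric.dist_le_diam_of_mem isCompact_univ.isBounded (mem_univ _) (mem_univ _)
  exact le_ciSup (f := fun y => dist (g y) (h y)) hbdd x

lemma liminf_eq_zero_iff' (d : ℕ → ℝ) (h0 : ∀ n, 0 ≤ d n) (C : ℝ) (hb : ∀ n, d n ≤ C) :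
    Filter.liminf d Filter.atTop = 0 ↔ ∀ ε > 0, ∀ N : ℕ, ∃ n ≥ N, d n < ε := by
  have hcob : Filter.IsCoboundedUnder (· ≥ ·) Filter.atTop d :=
    Filter.IsBoundedUnder.isCoboundedUnder_ge (Filter.isBoundedUnder_of ⟨C, hb⟩)
  have hbdd : Filter.IsBoundedUnder (· ≥ ·) Filter.atTop d :=
    Filter.isBoundedUnder_of ⟨0, h0⟩
  constructor
  · intro h ε hε N
    by_contra hc
    push_neg at hc
    have h2 : ε ≤ Filter.liminf d Filter.atTop :=
      Filter.le_liminf_of_le hcob (Filter.eventually_atTop.2 ⟨N, fun n hn => hc n hn⟩)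
    rw [h] at h2
    linarith
  · intro h
    refine le_antisymm ?_ (Filter.le_liminf_of_le hcob (Filter.Eventually.of_forall h0))
    refine le_of_forall_pos_le_add fun ε hε => ?_
    rw [zero_add]
    refine Filter.liminf_le_of_frequently_le ?_ hbdd
    rw [Filter.frequently_atTop]
    intro N
    obtain ⟨n, hn, hlt⟩ := h ε hε N
    exact ⟨n, hn, hlt.le⟩

lemma omega_continuous {X : Type*} [TopologicalSpace X] (fn : ℕ → X → X)
    (hfn : ∀ n, Continuous (fn n)) : ∀ M, Continuous (omega fn M)
  | 0 => continuous_id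
  | (k + 1) => (hfn (k + 1)).comp (omega_continuous fn hfn k)

lemma omega_surjective {X : Type*} (fn : ℕ → X → X)
    (hs : ∀ n, Function.Surjective (fn n)) : ∀ M, Function.Surjective (omega fn M)
  | 0 => Function.surjective_id
  | (k + 1) => (hs (k + 1)).comp (omega_surjective fn hs k)

lemma omegaSeg_comm {X : Type*} (f : X → X) (fn : ℕ → X → X)
    (hcomm : ∀ n, fn n ∘ f = f ∘ fn n) (M : ℕ) :
    ∀ k x, omegaSeg fn M k (f x) = f (omegaSeg fn M k x)
  | 0, x => rfl
  | (k + 1), x => by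
      show fn (M + k + 1) (omegaSeg fn M k (f x)) = f (fn (M + k + 1) (omegaSeg fn M k x))
      rw [omegaSeg_comm f fn hcomm M k x]
      exact congrFun (hcomm (M + k + 1)) _

lemma omega_add {X : Type*} (fn : ℕ → X → X) (M : ℕ) :
    ∀ k x, omega fn (M + k) x = omegaSeg fn M k (omega fn M x)
  | 0, x => rfl
  | (k + 1), x => by
      show fn (M + k + 1) (omega fn (M + k) x) = fn (M + k + 1) (omegaSeg fn M k (omega fn M x))
      rw [omega_add fn M k x]

lemma dist_iterate_omegaSeg {X : Type*} [MetricSpace X] [CompactSpace X]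
    (f : X → X) (fn : ℕ → X → X) (hcomm : ∀ n, fn n ∘ f = f ∘ fn n) (M : ℕ) :
    ∀ k x, dist (f^[k] x) (omegaSeg fn M k x) ≤ ∑ j ∈ Finset.range k, supD (fn (M + j + 1)) f
  | 0, x => by simp [omegaSeg]
  | (k + 1), x => by
      have h1 : f^[k + 1] x = f^[k] (f x) := Function.iterate_succ_apply f k x
      have h2 : omegaSeg fn M (k + 1) x = fn (M + k + 1) (omegaSeg fn M k x) := rfl
      rw [h1, h2, Finset.sum_range_succ]
      calc dist (f^[k] (f x)) (fn (M + k + 1) (omegaSeg fn M k x))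
          ≤ dist (f^[k] (f x)) (omegaSeg fn M k (f x))
            + dist (omegaSeg fn M k (f x)) (fn (M + k + 1) (omegaSeg fn M k x)) :=
            dist_triangle _ _ _
        _ ≤ (∑ j ∈ Finset.range k, supD (fn (M + j + 1)) f) + supD (fn (M + k + 1)) f := by
            refine add_le_add (dist_iterate_omegaSeg f fn hcomm M k (f x)) ?_
            rw [omegaSeg_comm f fn hcomm M k x, dist_comm]
            exact dist_le_supD _ _ _

theorem stmt19 {X : Type*} [MetricSpace X] [CompactSpace X] [Nonempty X]
    (f : X → X) (fn : ℕ → X → X)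
    (hf : Continuous f) (hfsurj : Function.Surjective f)
    (hfn : ∀ n, Continuous (fn n))
    (hsurj : ∀ n, Function.Surjective (fn n))
    (hcomm : ∀ n, fn n ∘ f = f ∘ fn n)
    (hsum : Summable fun n => supD (fn (n + 1)) f)
    (hdense : Dense {p : X × X |
      Filter.liminf (fun n : ℕ => dist (omega fn n p.1) (omega fn n p.2)) atTop = 0}) :
    Dense {p : X × X |
      Filter.liminf (fun n : ℕ => dist (f^[n] p.1) (f^[n] p.2)) atTop = 0} := by
  obtain ⟨C, hC⟩ : ∃ C, ∀ p q : X, dist p q ≤ C :=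
    ⟨Metric.diam (Set.univ : Set X), fun p q =>
      Metric.dist_le_diam_of_mem isCompact_univ.isBounded (mem_univ _) (mem_univ _)⟩
  set U : ℕ × ℕ → Set (X × X) := fun i =>
    {p | ∃ n ≥ i.2, dist (f^[n] p.1) (f^[n] p.2) < 1 / (i.1 + 1)} with hU
  have hUopen : ∀ i, IsOpen (U i) := by
    rintro ⟨m, N⟩
    have heq : U (m, N) = ⋃ n ∈ {n : ℕ | N ≤ n},
        {p : X × X | dist (f^[n] p.1) (f^[n] p.2) < 1 / (m + 1)} := by
      ext p
      simp [hU]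
    rw [heq]
    refine isOpen_biUnion fun n _ => ?_
    exact isOpen_lt
      (Continuous.dist ((hf.iterate n).comp continuous_fst) ((hf.iterate n).comp continuous_snd))
      continuous_const
  have hUdense : ∀ i, Dense (U i) := by
    rintro ⟨m, N⟩
    rw [dense_iff_inter_open]
    rintro O hO ⟨⟨x, y⟩, hxy⟩
    set ε : ℝ := 1 / (m + 1) with hεdef
    have hε : 0 < ε := by positivity
    -- choose M with tail < ε/4
    have htail : Tendsto (fun M => ∑' j : ℕ, supD (fn (j + M + 1)) f) atTop (nhds 0) :=
      tendsto_sum_nat_add (fun n => supD (fn (n + 1)) f)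
    obtain ⟨M, hM⟩ : ∃ M, ∑' j : ℕ, supD (fn (j + M + 1)) f < ε / 4 := by
      have := (htail.eventually (eventually_lt_nhds (show (0:ℝ) < ε / 4 by linarith))).exists
      exact this
    set T := ∑' j : ℕ, supD (fn (j + M + 1)) f with hT
    have hsummable : Summable fun j => supD (fn (j + M + 1)) f := by
      have := (summable_nat_add_iff M).2 hsum
      simpa using this
    have hkey : ∀ k (z : X), dist (f^[k] z) (omegaSeg fn M k z) ≤ T := by
      intro k z
      refine (dist_iterate_omegaSeg f fn hcomm M k z).trans ?_
      have heq : ∑ j ∈ Finset.range k, supD (fn (M + j + 1)) f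
          = ∑ j ∈ Finset.range k, supD (fn (j + M + 1)) f := by
        refine Finset.sum_congr rfl fun j _ => ?_
        rw [show M + j + 1 = j + M + 1 by omega]
      rw [heq]
      exact Summable.sum_le_tsum _ (fun j _ => Real.iSup_nonneg fun x => dist_nonneg) hsummable
    -- pull back O through omega M × omega M
    have hωc : Continuous (omega fn M) := omega_continuous fn hfn M
    have hωs : Function.Surjective (omega fn M) := omega_surjective fn hsurj M
    set Φ : X × X → X × X := fun q => (omega fn M q.1, omega fn M q.2) with hΦ
    have hΦc : Continuous Φ := (hωc.comp continuous_fst).prodMk (hωc.comp continuous_snd)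
    have hO' : IsOpen (Φ ⁻¹' O) := hO.preimage hΦc
    have hO'ne : (Φ ⁻¹' O).Nonempty := by
      obtain ⟨x', hx'⟩ := hωs x
      obtain ⟨y', hy'⟩ := hωs y
      exact ⟨(x', y'), by simp [hΦ, hx', hy', hxy]⟩
    obtain ⟨⟨a, b⟩, habO, hprox⟩ :=
      hdense.inter_open_nonempty _ hO' hO'ne
    have hprox' := (liminf_eq_zero_iff' _ (fun n => dist_nonneg) C
      (fun n => hC _ _)).1 hprox (ε / 4) (by linarith) (M + N)
    obtain ⟨n, hn, hlt⟩ := hprox'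
    set k := n - M with hk
    have hnk : n = M + k := by omega
    have hkN : N ≤ k := by omega
    set u := omega fn M a with hu
    set v := omega fn M b with hv
    refine ⟨(u, v), habO, ⟨k, hkN, ?_⟩⟩
    have hmid : dist (omegaSeg fn M k u) (omegaSeg fn M k v) < ε / 4 := by
      rw [hu, hv, ← omega_add fn M k a, ← omega_add fn M k b, ← hnk]
      exact hlt
    calc dist (f^[k] u) (f^[k] v)
        ≤ dist (f^[k] u) (omegaSeg fn M k u) + dist (omegaSeg fn M k u) (omegaSeg fn M k v)
          + dist (omegaSeg fn M k v) (f^[k] v) := dist_triangle4 _ _ _ _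
      _ ≤ T + ε / 4 + T :=
          add_le_add (add_le_add (hkey k u) hmid.le) (by rw [dist_comm]; exact hkey k v)
      _ < ε := by
          have h1 : T < ε / 4 := hM
          linarith
  have hbaire : Dense (⋂ i, U i) := dense_iInter_of_isOpen hUopen hUdense
  refine hbaire.mono ?_
  intro p hp
  rw [mem_iInter] at hp
  refine (liminf_eq_zero_iff' _ (fun n => dist_nonneg) C (fun n => hC _ _)).2 ?_
  intro ε hε N
  obtain ⟨m, hm⟩ := exists_nat_one_div_lt hε
  obtain ⟨n, hn, hlt⟩ := hp (m, N)
  exact ⟨n, hn, hlt.trans hm⟩
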